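/- arXiv:2110.14134 — 2 statements merged into one kernel-verified Lean document; each statement's English description precedes it below -/
import Mathlib

section
/- For θ ∈ [0, π/2], let U(θ) := {(x,y) ∈ [0,1]² : x² + y² + 2|cos θ|·√((1−x²)(1−y²)) ≥ 1 + cos²θ}. Then the two-dimensional Lebesgue measure of U(θ) equals (1/2)(π − 3θ)·sin θ − cos θ + 1. -/
open Matrix MeasureTheory Filter Set
open scoped RealInnerProductSpace Kronecker ComplexOrder

noncomputable section

/-- ℝ³ with the Euclidean norm and inner product. -/
abbrev E3 : Type := EuclideanSpace ℝ (Fin 3)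

/-- The Pauli matrices. -/
def pauli1 : Matrix (Fin 2) (Fin 2) ℂ := !![0, 1; 1, 0]
def pauli2 : Matrix (Fin 2) (Fin 2) ℂ := !![0, -Complex.I; Complex.I, 0]
def pauli3 : Matrix (Fin 2) (Fin 2) ℂ := !![1, 0; 0, -1]

/-- The qubit observable `a₀·I + a·σ`. -/
def qObs (a0 : ℝ) (a : E3) : Matrix (Fin 2) (Fin 2) ℂ :=
  (a0 : ℂ) • (1 : Matrix (Fin 2) (Fin 2) ℂ)
    + (a 0 : ℂ) • pauli1 + (a 1 : ℂ) • pauli2 + (a 2 : ℂ) • pauli3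

/-- A density matrix: positive semidefinite with trace one. -/
def IsDensityMatrix {n : Type*} [Fintype n] (ρ : Matrix n n ℂ) : Prop :=
  ρ.PosSemidef ∧ ρ.trace = 1

/-- Mean value `⟨M⟩_ρ = Tr(Mρ)` of an observable `M` in the state `ρ`. -/
def mean {n : Type*} [Fintype n] (M ρ : Matrix n n ℂ) : ℝ :=
  (Matrix.trace (M * ρ)).re

/-- Variance `(Δ_ρ M)² = Tr(M²ρ) − (Tr(Mρ))²`. -/
def variance {n : Type*} [Fintype n] (M ρ : Matrix n n ℂ) : ℝ :=
  (Matrix.trace (M * M * ρ)).re - (mean M ρ) ^ 2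

/-- Uncertainty `Δ_ρ M` (standard deviation). -/
def uncertainty {n : Type*} [Fintype n] (M ρ : Matrix n n ℂ) : ℝ :=
  Real.sqrt (variance M ρ)

/-- Gram matrix of a tuple of vectors in ℝ³. -/
def gram {m : ℕ} (v : Fin m → E3) : Matrix (Fin m) (Fin m) ℝ :=
  Matrix.of fun i j => (inner ℝ (v i) (v j) : ℝ)

lemma gram_isHermitian {m : ℕ} (v : Fin m → E3) : (gram v).IsHermitian := by
  ext i j
  simp [_root_.gram, Matrix.conjTranspose_apply, real_inner_comm]

/-- Smallest eigenvalue of the Gram matrix. -/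
def lamMin {m : ℕ} (v : Fin m → E3) : ℝ := ⨅ i, (gram_isHermitian v).eigenvalues i

/-- Largest eigenvalue of the Gram matrix. -/
def lamMax {m : ℕ} (v : Fin m → E3) : ℝ := ⨆ i, (gram_isHermitian v).eigenvalues i

/-!
Write `x = sin a`, `y = sin b` with `a, b ∈ [0, π/2]`, and `c = cos θ`, `s = sin θ`. Since
`x² + y² + 2c·cos a·cos b − 1 − c² = (s·x)² − (cos b − c·cos a)²`, the defining inequality of
`U(θ)` says `cos (a + θ) ≤ cos b ≤ cos (a − θ)`, that is `|a − b| ≤ θ ≤ a + b`. So the vertical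
section of `U(θ)` over `x` is the segment from `|sin (a − θ)| = |c x − s √(1 − x²)|` to
`sin (a + θ) = c x + s √(1 − x²)`, capped at `1` once `a + θ ≥ π/2`, i.e. once `x ≥ c`. The area
is the integral of the length of this segment; splitting at `x = c` and `x = s`, everything
reduces to integrals of `√(1 − x²)` over arcs, evaluated by the substitution `x = sin t`.
-/

open Real intervalIntegral

section RegionBetween

variable {α : Type*} [MeasurableSpace α] {μ : Measure α} {f g : α → ℝ} {s : Set α}

theorem volume_region_between_cc_eq_integral [SigmaFinite μ] (hf : Measurable f)
    (hg : Measurable g) (f_int : IntegrableOn f s μ) (g_int : IntegrableOn g s μ)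
    (hs : MeasurableSet s) (hfg : ∀ x ∈ s, f x ≤ g x) :
    μ.prod volume {p : α × ℝ | p.1 ∈ s ∧ p.2 ∈ Icc (f p.1) (g p.1)} =
      ENNReal.ofReal (∫ y in s, (g - f) y ∂μ) := by
  rw [← volume_regionBetween_eq_integral f_int g_int hs hfg,
    Measure.prod_apply (measurableSet_region_between_cc hf hg hs),
    Measure.prod_apply (measurableSet_regionBetween hf hg hs)]
  refine lintegral_congr fun x => ?_
  by_cases hx : x ∈ s
  · have hIcc :
        Prod.mk x ⁻¹' {p : α × ℝ | p.1 ∈ s ∧ p.2 ∈ Icc (f p.1) (g p.1)} = Icc (f x) (g x) := by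
      ext; simp [hx]
    have hIoo : Prod.mk x ⁻¹' regionBetween f g s = Ioo (f x) (g x) := by
      ext; simp [regionBetween, hx]
    rw [hIcc, hIoo, Real.volume_Icc, Real.volume_Ioo]
  · simp [regionBetween, hx, Set.preimage]

end RegionBetween

theorem integral_sqrt_one_sub_sq_sin {a b : ℝ} (ha : a ∈ Icc (-(π / 2)) (π / 2))
    (hb : b ∈ Icc (-(π / 2)) (π / 2)) :
    ∫ x in sin a..sin b, √(1 - x ^ 2) = (b + sin b * cos b - (a + sin a * cos a)) / 2 := by
  have hcos : ∀ t ∈ uIcc a b, √(1 - sin t ^ 2) * cos t = cos t ^ 2 := by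
    intro t ht
    have ht' := uIcc_subset_Icc ha hb ht
    rw [← cos_eq_sqrt_one_sub_sin_sq ht'.1 ht'.2, sq]
  rw [← integral_comp_mul_deriv (fun x _ => hasDerivAt_sin x) continuousOn_cos (by fun_prop)]
  simp only [Function.comp_apply]
  rw [integral_congr hcos, integral_cos_sq]
  ring

theorem le_iff_le_of_sq_add_sq_eq {a b c d : ℝ} (ha : 0 ≤ a) (hb : 0 ≤ b) (hc : 0 ≤ c)
    (hd : 0 ≤ d) (h : a ^ 2 + b ^ 2 = c ^ 2 + d ^ 2) : a ≤ c ↔ d ≤ b := by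
  rw [← pow_le_pow_iff_left₀ ha hc two_ne_zero, ← pow_le_pow_iff_left₀ hd hb two_ne_zero]
  constructor <;> intro <;> linarith

section UnitSquare

variable {c s x y : ℝ}

theorem sq_sqrt_one_sub_sq (hx : x ∈ Icc (0 : ℝ) 1) : √(1 - x ^ 2) ^ 2 = 1 - x ^ 2 :=
  sq_sqrt (by nlinarith [hx.1, hx.2])

theorem add_sq_add_sub_sq_sqrt (hcs : c ^ 2 + s ^ 2 = 1) (hx : x ∈ Icc (0 : ℝ) 1) :
    (c * x + s * √(1 - x ^ 2)) ^ 2 + (c * √(1 - x ^ 2) - s * x) ^ 2 = 1 := by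
  linear_combination (x ^ 2 + √(1 - x ^ 2) ^ 2) * hcs + sq_sqrt_one_sub_sq hx

theorem sub_sq_add_add_sq_sqrt (hcs : c ^ 2 + s ^ 2 = 1) (hx : x ∈ Icc (0 : ℝ) 1) :
    (c * x - s * √(1 - x ^ 2)) ^ 2 + (c * √(1 - x ^ 2) + s * x) ^ 2 = 1 := by
  linear_combination (x ^ 2 + √(1 - x ^ 2) ^ 2) * hcs + sq_sqrt_one_sub_sq hx

theorem mul_le_mul_sqrt_one_sub_sq_iff (hc : 0 ≤ c) (hs : 0 ≤ s) (hcs : c ^ 2 + s ^ 2 = 1)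
    (hx : x ∈ Icc (0 : ℝ) 1) : c * x ≤ s * √(1 - x ^ 2) ↔ x ≤ s := by
  rw [← pow_le_pow_iff_left₀ (by positivity [hx.1]) (by positivity) two_ne_zero, mul_pow,
    mul_pow, sq_sqrt_one_sub_sq hx, ← pow_le_pow_iff_left₀ hx.1 hs two_ne_zero]
  constructor <;> intro <;> nlinarith

theorem mul_sqrt_one_sub_sq_le_mul_iff (hc : 0 ≤ c) (hs : 0 ≤ s) (hcs : c ^ 2 + s ^ 2 = 1)
    (hx : x ∈ Icc (0 : ℝ) 1) : s * √(1 - x ^ 2) ≤ c * x ↔ s ≤ x := by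
  rw [← pow_le_pow_iff_left₀ (by positivity) (by positivity [hx.1]) two_ne_zero, mul_pow,
    mul_pow, sq_sqrt_one_sub_sq hx, ← pow_le_pow_iff_left₀ hs hx.1 two_ne_zero]
  constructor <;> intro <;> nlinarith

def lowerBoundary (c s x : ℝ) : ℝ := |c * x - s * √(1 - x ^ 2)|

def upperBoundary (c s x : ℝ) : ℝ := if x ≤ c then c * x + s * √(1 - x ^ 2) else 1

theorem upperBoundary_of_le (hx : x ≤ c) :
    upperBoundary c s x = c * x + s * √(1 - x ^ 2) :=
  if_pos hx

theorem upperBoundary_le_one (hcs : c ^ 2 + s ^ 2 = 1) (hx : x ∈ Icc (0 : ℝ) 1) :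
    upperBoundary c s x ≤ 1 := by
  unfold upperBoundary
  split_ifs
  · exact (le_abs_self _).trans ((sq_le_one_iff_abs_le_one _).1
      (by nlinarith [add_sq_add_sub_sq_sqrt hcs hx, sq_nonneg (c * √(1 - x ^ 2) - s * x)]))
  · exact le_rfl

theorem lowerBoundary_le_upperBoundary (hc : 0 ≤ c) (hs : 0 ≤ s) (hcs : c ^ 2 + s ^ 2 = 1)
    (hx : x ∈ Icc (0 : ℝ) 1) : lowerBoundary c s x ≤ upperBoundary c s x := by
  unfold lowerBoundary upperBoundary
  split_ifs
  · have : 0 ≤ c * x := mul_nonneg hc hx.1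
    have : 0 ≤ s * √(1 - x ^ 2) := by positivity
    exact abs_le.2 ⟨by linarith, by linarith⟩
  · exact (sq_le_one_iff_abs_le_one _).1
      (by nlinarith [sub_sq_add_add_sq_sqrt hcs hx, sq_nonneg (c * √(1 - x ^ 2) + s * x)])

theorem upperBoundary_of_ge (hs : 0 ≤ s) (hcs : c ^ 2 + s ^ 2 = 1) (hx : c ≤ x) :
    upperBoundary c s x = 1 := by
  unfold upperBoundary
  split_ifs with hxc
  · obtain rfl : c = x := le_antisymm hx hxc
    rw [show 1 - c ^ 2 = s ^ 2 by linarith, sqrt_sq hs]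
    linear_combination hcs
  · rfl

theorem continuous_lowerBoundary : Continuous (lowerBoundary c s) := by
  unfold lowerBoundary
  fun_prop

theorem continuous_upperBoundary (hs : 0 ≤ s) (hcs : c ^ 2 + s ^ 2 = 1) :
    Continuous (upperBoundary c s) := by
  refine Continuous.if_le (by fun_prop) continuous_const continuous_id continuous_const ?_
  rintro x rfl
  simpa [upperBoundary] using upperBoundary_of_ge hs hcs le_rfl

theorem lowerBoundary_of_le (hc : 0 ≤ c) (hs : 0 ≤ s) (hcs : c ^ 2 + s ^ 2 = 1)
    (hx : x ∈ Icc (0 : ℝ) 1) (hxs : x ≤ s) :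
    lowerBoundary c s x = s * √(1 - x ^ 2) - c * x := by
  rw [lowerBoundary, abs_of_nonpos
    (sub_nonpos.2 ((mul_le_mul_sqrt_one_sub_sq_iff hc hs hcs hx).2 hxs)), neg_sub]

theorem lowerBoundary_of_ge (hc : 0 ≤ c) (hs : 0 ≤ s) (hcs : c ^ 2 + s ^ 2 = 1)
    (hx : x ∈ Icc (0 : ℝ) 1) (hsx : s ≤ x) :
    lowerBoundary c s x = c * x - s * √(1 - x ^ 2) := by
  rw [lowerBoundary, abs_of_nonneg
    (sub_nonneg.2 ((mul_sqrt_one_sub_sq_le_mul_iff hc hs hcs hx).2 hsx))]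

theorem uncertainty_condition_iff (hc : 0 ≤ c) (hs : 0 ≤ s) (hcs : c ^ 2 + s ^ 2 = 1)
    (hx : x ∈ Icc (0 : ℝ) 1) (hy : y ∈ Icc (0 : ℝ) 1) :
    x ^ 2 + y ^ 2 + 2 * c * √((1 - x ^ 2) * (1 - y ^ 2)) ≥ 1 + c ^ 2 ↔
      y ∈ Icc (lowerBoundary c s x) (upperBoundary c s x) := by
  set u := √(1 - x ^ 2)
  set v := √(1 - y ^ 2)
  have hv : 0 ≤ v := sqrt_nonneg _
  have hvy : v ^ 2 + y ^ 2 = 1 := by linarith [sq_sqrt_one_sub_sq hy]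
  have hsq :
      x ^ 2 + y ^ 2 + 2 * c * (u * v) - (1 + c ^ 2) = (s * x) ^ 2 - (v - c * u) ^ 2 := by
    linear_combination (-x ^ 2) * hcs + hvy + c ^ 2 * sq_sqrt_one_sub_sq hx
  have hlower : v ≤ c * u + s * x ↔ lowerBoundary c s x ≤ y :=
    le_iff_le_of_sq_add_sq_eq hv hy.1 (by positivity [hx.1]) (abs_nonneg _)
      (by rw [lowerBoundary, sq_abs, hvy]; linear_combination -sub_sq_add_add_sq_sqrt hcs hx)
  have hupper : c * u - s * x ≤ v ↔ y ≤ upperBoundary c s x := by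
    by_cases hxc : x ≤ c
    · rw [upperBoundary_of_le hxc]
      refine le_iff_le_of_sq_add_sq_eq ?_ (by positivity [hx.1]) hv hy.1
        (by rw [hvy]; linear_combination add_sq_add_sub_sq_sqrt hcs hx)
      linarith [(mul_le_mul_sqrt_one_sub_sq_iff hs hc (by linarith) hx).2 hxc]
    · have hcu : c * u ≤ s * x :=
        (mul_sqrt_one_sub_sq_le_mul_iff hs hc (by linarith) hx).2 (le_of_not_ge hxc)
      rw [upperBoundary, if_neg hxc]
      exact iff_of_true (by linarith) hy.2
  rw [sqrt_mul (by nlinarith [hx.1, hx.2])]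
  calc _ ↔ (v - c * u) ^ 2 ≤ (s * x) ^ 2 := by constructor <;> intro <;> linarith
    _ ↔ |v - c * u| ≤ s * x := by rw [sq_le_sq, abs_of_nonneg (mul_nonneg hs hx.1)]
    _ ↔ c * u - s * x ≤ v ∧ v ≤ c * u + s * x := by
      rw [abs_le]; constructor <;> rintro ⟨h₁, h₂⟩ <;> constructor <;> linarith
    _ ↔ _ := by rw [hupper, hlower, mem_Icc, and_comm]

end UnitSquare

theorem setOf_uncertainty_eq {c s : ℝ} (hc : 0 ≤ c) (hs : 0 ≤ s) (hcs : c ^ 2 + s ^ 2 = 1) :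
    {p : ℝ × ℝ | p.1 ∈ Icc (0 : ℝ) 1 ∧ p.2 ∈ Icc (0 : ℝ) 1 ∧
        p.1 ^ 2 + p.2 ^ 2 + 2 * c * √((1 - p.1 ^ 2) * (1 - p.2 ^ 2)) ≥ 1 + c ^ 2} =
      {p | p.1 ∈ Icc (0 : ℝ) 1 ∧ p.2 ∈ Icc (lowerBoundary c s p.1) (upperBoundary c s p.1)} := by
  ext ⟨x, y⟩
  simp only [mem_ofPred_eq]
  constructor
  · rintro ⟨hx, hy, h⟩
    exact ⟨hx, (uncertainty_condition_iff hc hs hcs hx hy).1 h⟩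
  · rintro ⟨hx, hy⟩
    have hy₀₁ : y ∈ Icc (0 : ℝ) 1 :=
      ⟨(abs_nonneg _).trans hy.1, hy.2.trans (upperBoundary_le_one hcs hx)⟩
    exact ⟨hx, hy₀₁, (uncertainty_condition_iff hc hs hcs hx hy₀₁).2 hy⟩

section Integrals

variable {θ : ℝ}

theorem cos_nonneg_and_sin_nonneg (hθ : θ ∈ Icc 0 (π / 2)) : 0 ≤ cos θ ∧ 0 ≤ sin θ :=
  ⟨cos_nonneg_of_mem_Icc ⟨by linarith [pi_pos, hθ.1], hθ.2⟩,
    sin_nonneg_of_nonneg_of_le_pi hθ.1 (by linarith [pi_pos, hθ.2])⟩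

theorem integral_upperBoundary (hθ : θ ∈ Icc 0 (π / 2)) :
    ∫ x in (0 : ℝ)..1, upperBoundary (cos θ) (sin θ) x =
      1 - cos θ / 2 + (π / 2 - θ) * sin θ / 2 := by
  obtain ⟨hc, hs⟩ := cos_nonneg_and_sin_nonneg hθ
  have hcs := cos_sq_add_sin_sq θ
  have hcont := continuous_upperBoundary hs hcs
  have harc : ∫ x in (0 : ℝ)..cos θ, √(1 - x ^ 2) = (π / 2 - θ + cos θ * sin θ) / 2 := by
    simpa [sin_pi_div_two_sub, cos_pi_div_two_sub] using integral_sqrt_one_sub_sq_sin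
      (a := 0) (b := π / 2 - θ) ⟨by linarith [pi_pos], by linarith [pi_pos]⟩
      ⟨by linarith [pi_pos, hθ.2], by linarith [hθ.1]⟩
  rw [← integral_add_adjacent_intervals (hcont.intervalIntegrable 0 (cos θ))
      (hcont.intervalIntegrable _ 1),
    integral_congr (g := fun x => cos θ * x + sin θ * √(1 - x ^ 2))
      (fun x hx => upperBoundary_of_le (uIcc_of_le hc ▸ hx).2),
    integral_congr (g := fun _ => 1)
      (fun x hx => upperBoundary_of_ge hs hcs (uIcc_of_le (cos_le_one θ) ▸ hx).1),
    intervalIntegral.integral_add (Continuous.intervalIntegrable (by fun_prop) _ _)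
      (Continuous.intervalIntegrable (by fun_prop) _ _),
    intervalIntegral.integral_const_mul, intervalIntegral.integral_const_mul, integral_id,
    harc, integral_one]
  linear_combination (cos θ / 2) * hcs

theorem integral_lowerBoundary (hθ : θ ∈ Icc 0 (π / 2)) :
    ∫ x in (0 : ℝ)..1, lowerBoundary (cos θ) (sin θ) x = cos θ / 2 + (θ - π / 4) * sin θ := by
  obtain ⟨hc, hs⟩ := cos_nonneg_and_sin_nonneg hθ
  have hcs := cos_sq_add_sin_sq θ
  have hcont : Continuous (lowerBoundary (cos θ) (sin θ)) := continuous_lowerBoundary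
  have harc₁ : ∫ x in (0 : ℝ)..sin θ, √(1 - x ^ 2) = (θ + sin θ * cos θ) / 2 := by
    simpa using integral_sqrt_one_sub_sq_sin (a := 0) (b := θ)
      ⟨by linarith [pi_pos], by linarith [pi_pos]⟩ ⟨by linarith [pi_pos, hθ.1], hθ.2⟩
  have harc₂ : ∫ x in sin θ..1, √(1 - x ^ 2) = (π / 2 - (θ + sin θ * cos θ)) / 2 := by
    simpa using integral_sqrt_one_sub_sq_sin (a := θ) (b := π / 2)
      ⟨by linarith [pi_pos, hθ.1], hθ.2⟩ ⟨by linarith [pi_pos], le_rfl⟩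
  have hleft : ∫ x in (0 : ℝ)..sin θ, lowerBoundary (cos θ) (sin θ) x
      = ∫ x in (0 : ℝ)..sin θ, (sin θ * √(1 - x ^ 2) - cos θ * x) := by
    refine integral_congr fun x hx => ?_
    rw [uIcc_of_le hs] at hx
    exact lowerBoundary_of_le hc hs hcs ⟨hx.1, hx.2.trans (sin_le_one θ)⟩ hx.2
  have hright : ∫ x in sin θ..1, lowerBoundary (cos θ) (sin θ) x
      = ∫ x in sin θ..1, (cos θ * x - sin θ * √(1 - x ^ 2)) := by
    refine integral_congr fun x hx => ?_
    rw [uIcc_of_le (sin_le_one θ)] at hx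
    exact lowerBoundary_of_ge hc hs hcs ⟨hs.trans hx.1, hx.2⟩ hx.1
  rw [← integral_add_adjacent_intervals (hcont.intervalIntegrable 0 (sin θ))
      (hcont.intervalIntegrable _ 1), hleft, hright,
    intervalIntegral.integral_sub (Continuous.intervalIntegrable (by fun_prop) _ _)
      (Continuous.intervalIntegrable (by fun_prop) _ _),
    intervalIntegral.integral_sub (Continuous.intervalIntegrable (by fun_prop) _ _)
      (Continuous.intervalIntegrable (by fun_prop) _ _),
    intervalIntegral.integral_const_mul, intervalIntegral.integral_const_mul,
    intervalIntegral.integral_const_mul, intervalIntegral.integral_const_mul, integral_id,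
    integral_id, harc₁, harc₂]
  ring

end Integrals

/-- the area of the uncertainty region U(θ). -/
theorem volume_uncertainty_region (θ : ℝ) (hθ : θ ∈ Set.Icc 0 (Real.pi / 2)) :
    MeasureTheory.volume
        {p : ℝ × ℝ | p.1 ∈ Set.Icc (0 : ℝ) 1 ∧ p.2 ∈ Set.Icc (0 : ℝ) 1 ∧
          p.1 ^ 2 + p.2 ^ 2
              + 2 * |Real.cos θ| * Real.sqrt ((1 - p.1 ^ 2) * (1 - p.2 ^ 2))
            ≥ 1 + Real.cos θ ^ 2} =
      ENNReal.ofReal ((1 / 2) * (Real.pi - 3 * θ) * Real.sin θ - Real.cos θ + 1) := by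
  obtain ⟨hc, hs⟩ := cos_nonneg_and_sin_nonneg hθ
  have hcs := cos_sq_add_sin_sq θ
  have hlower : Continuous (lowerBoundary (cos θ) (sin θ)) := continuous_lowerBoundary
  have hupper := continuous_upperBoundary hs hcs
  rw [abs_of_nonneg hc, setOf_uncertainty_eq hc hs hcs, Measure.volume_eq_prod,
    volume_region_between_cc_eq_integral hlower.measurable hupper.measurable
      hlower.integrableOn_Icc hupper.integrableOn_Icc measurableSet_Icc
      (fun x hx => lowerBoundary_le_upperBoundary hc hs hcs hx),
    integral_Icc_eq_integral_Ioc, ← intervalIntegral.integral_of_le zero_le_one]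
  simp only [Pi.sub_apply]
  rw [intervalIntegral.integral_sub (hupper.intervalIntegrable _ _)
      (hlower.intervalIntegrable _ _), integral_upperBoundary hθ, integral_lowerBoundary hθ]
  congr 1
  ring
end
end

section
/- Let A = a₀·I + a·σ, B = b₀·I + b·σ, C = c₀·I + c·σ be qubit observables with {a,b,c} linearly independent in ℝ³. Then the infimum over all qubit density matrices ρ of (Δ_ρA)² + (Δ_ρB)² + (Δ_ρC)² equals Tr(T_{a,b,c}) − λ_max(T_{a,b,c}), and this infimum is attained by some qubit density matrix. -/
open Matrix MeasureTheory Filter Set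
open scoped RealInnerProductSpace Kronecker ComplexOrder

noncomputable section

/-!
A qubit state is `ρ = (I + r·σ)/2` with Bloch vector `‖r‖ ≤ 1`, and in that state
`(Δ_ρ A)² = ‖a‖² - ⟪a, r⟫²`. The sum of the three variances is therefore
`Tr T - (⟪a, r⟫² + ⟪b, r⟫² + ⟪c, r⟫²)`, and for `u = ∑ wᵢ vᵢ` Cauchy–Schwarz gives
`(∑ ⟪vᵢ, r⟫²)² = ⟪u, r⟫² ≤ ‖u‖² ‖r‖² ≤ λ_max (∑ ⟪vᵢ, r⟫²) ‖r‖²` with `wᵢ = ⟪vᵢ, r⟫`.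
The bound is attained at `r = u / ‖u‖` when `w` is a unit top eigenvector of the Gram matrix,
since then `⟪vᵢ, u⟫ = λ_max wᵢ` and `‖u‖² = λ_max`.
-/

lemma inner_eq_coords (a b : E3) : ⟪a, b⟫ = a 0 * b 0 + a 1 * b 1 + a 2 * b 2 := by
  simp [PiLp.inner_apply, Fin.sum_univ_three, mul_comm]

lemma norm_sq_eq_coords (a : E3) : ‖a‖ ^ 2 = a 0 ^ 2 + a 1 ^ 2 + a 2 ^ 2 := by
  rw [← real_inner_self_eq_norm_sq, inner_eq_coords]; ring

lemma qObs_eq (a0 : ℝ) (a : E3) :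
    qObs a0 a = !![(a0 + a 2 : ℂ), a 0 - a 1 * Complex.I; a 0 + a 1 * Complex.I, a0 - a 2] := by
  ext i j; fin_cases i <;> fin_cases j <;> simp [qObs, pauli1, pauli2, pauli3] <;> ring

lemma qObs_isHermitian (a0 : ℝ) (a : E3) : (qObs a0 a).IsHermitian := by
  ext i j; fin_cases i <;> fin_cases j <;> simp [qObs_eq, Complex.ext_iff]

lemma trace_qObs (a0 : ℝ) (a : E3) : (qObs a0 a).trace = 2 * a0 := by
  simp [qObs_eq, Matrix.trace_fin_two]; ring

lemma det_qObs (a0 : ℝ) (a : E3) : (qObs a0 a).det = ((a0 ^ 2 - ‖a‖ ^ 2 : ℝ) : ℂ) := by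
  rw [qObs_eq, Matrix.det_fin_two_of, norm_sq_eq_coords]
  push_cast; ring_nf; rw [Complex.I_sq]; ring

lemma qObs_mul_self (a0 : ℝ) (a : E3) :
    qObs a0 a * qObs a0 a = qObs (a0 ^ 2 + ‖a‖ ^ 2) ((2 * a0) • a) := by
  rw [norm_sq_eq_coords]
  ext i j
  fin_cases i <;> fin_cases j <;> simp [qObs_eq, Matrix.mul_apply] <;> ring_nf <;>
    simp only [Complex.I_sq] <;> ring

lemma trace_qObs_mul_qObs (a0 b0 : ℝ) (a b : E3) :
    (qObs a0 a * qObs b0 b).trace = ((2 * (a0 * b0 + ⟪a, b⟫) : ℝ) : ℂ) := by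
  rw [inner_eq_coords]
  simp [qObs_eq, Matrix.trace_fin_two]
  ring_nf; simp [Complex.I_sq]

lemma exists_eq_qObs {M : Matrix (Fin 2) (Fin 2) ℂ} (hM : M.IsHermitian) :
    ∃ a0 a, M = qObs a0 a := by
  have h (i j) : star (M j i) = M i j := by simpa using congrFun₂ hM.eq i j
  have h00 := congrArg Complex.im (h 0 0)
  have h11 := congrArg Complex.im (h 1 1)
  have h01 := h 0 1
  simp only [Complex.star_def, Complex.conj_im] at h00 h11
  refine ⟨((M 0 0).re + (M 1 1).re) / 2,
    !₂[(M 1 0).re, (M 1 0).im, ((M 0 0).re - (M 1 1).re) / 2], ?_⟩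
  rw [qObs_eq]
  ext i j
  fin_cases i <;> fin_cases j <;> apply Complex.ext <;> simp [← h01] <;> linarith

lemma Matrix.IsHermitian.posSemidef_of_trace_nonneg_of_det_nonneg {𝕜 : Type*} [RCLike 𝕜]
    {A : Matrix (Fin 2) (Fin 2) 𝕜} (hA : A.IsHermitian) (htr : 0 ≤ A.trace) (hdet : 0 ≤ A.det) :
    A.PosSemidef := by
  rw [hA.trace_eq_sum_eigenvalues, Fin.sum_univ_two, ← RCLike.ofReal_add,
    RCLike.ofReal_nonneg] at htr
  rw [hA.det_eq_prod_eigenvalues, Fin.prod_univ_two, ← RCLike.ofReal_mul,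
    RCLike.ofReal_nonneg] at hdet
  rw [hA.posSemidef_iff_eigenvalues_nonneg]
  intro i
  fin_cases i <;> simp <;> nlinarith

/-- The state `(I + r·σ)/2` with Bloch vector `r`. -/
def blochState (r : E3) : Matrix (Fin 2) (Fin 2) ℂ := qObs (1 / 2) ((1 / 2 : ℝ) • r)

theorem isDensityMatrix_iff_exists_blochState {ρ : Matrix (Fin 2) (Fin 2) ℂ} :
    IsDensityMatrix ρ ↔ ∃ r : E3, ‖r‖ ≤ 1 ∧ ρ = blochState r := by
  constructor
  · rintro ⟨hpos, htr⟩
    obtain ⟨a0, a, rfl⟩ := exists_eq_qObs hpos.isHermitian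
    have ha0 : a0 = 1 / 2 := by
      rw [trace_qObs] at htr
      have : (2 * a0 : ℝ) = 1 := by exact_mod_cast htr
      linarith
    have hdet := hpos.det_nonneg
    rw [det_qObs, Complex.zero_le_real, ha0] at hdet
    refine ⟨(2 : ℝ) • a, ?_, ?_⟩
    · rw [norm_smul, Real.norm_two]
      nlinarith [norm_nonneg a]
    · rw [blochState, smul_smul, ha0]; norm_num
  · rintro ⟨r, hr, rfl⟩
    have hdet : 0 ≤ (blochState r).det := by
      rw [blochState, det_qObs, Complex.zero_le_real, norm_smul]
      norm_num
      nlinarith [norm_nonneg r]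
    have htr : (blochState r).trace = 1 := by
      rw [blochState, trace_qObs]; norm_num
    have hH : (blochState r).IsHermitian := qObs_isHermitian _ _
    exact ⟨hH.posSemidef_of_trace_nonneg_of_det_nonneg (htr ▸ zero_le_one) hdet, htr⟩

lemma variance_qObs_blochState (a0 : ℝ) (a r : E3) :
    variance (qObs a0 a) (blochState r) = ‖a‖ ^ 2 - ⟪a, r⟫ ^ 2 := by
  rw [variance, mean, blochState, qObs_mul_self, trace_qObs_mul_qObs, trace_qObs_mul_qObs,
    Complex.ofReal_re, Complex.ofReal_re, inner_smul_right, inner_smul_right, real_inner_smul_left]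
  ring

open scoped MatrixOrder in
lemma Matrix.IsHermitian.dotProduct_mulVec_le_of_eigenvalues_le {n : Type*} [Fintype n]
    [DecidableEq n]
    {G : Matrix n n ℝ} (hG : G.IsHermitian) {c : ℝ} (hc : ∀ i, hG.eigenvalues i ≤ c)
    (w : n → ℝ) : w ⬝ᵥ G *ᵥ w ≤ c * (w ⬝ᵥ w) := by
  have hle : G ≤ algebraMap ℝ _ c := by
    refine le_algebraMap_of_spectrum_le ?_
    rw [hG.spectrum_real_eq_range_eigenvalues]
    rintro _ ⟨i, rfl⟩
    exact hc i
  have := (Matrix.le_iff.1 hle).dotProduct_mulVec_nonneg w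
  rw [Algebra.algebraMap_eq_smul_one, Matrix.sub_mulVec, dotProduct_sub, Matrix.smul_mulVec,
    Matrix.one_mulVec, dotProduct_smul, smul_eq_mul] at this
  simpa using this

section Gram

variable {m : ℕ} (v : Fin m → E3)

lemma gram_eq_matrix_gram : gram v = Matrix.gram ℝ v := rfl

lemma trace_gram : (gram v).trace = ∑ i, ‖v i‖ ^ 2 := by
  simp [Matrix.trace, _root_.gram]

lemma gram_mulVec (w : Fin m → ℝ) (i : Fin m) : (gram v *ᵥ w) i = ⟪v i, ∑ j, w j • v j⟫ := by
  simp [Matrix.mulVec, dotProduct, inner_sum, real_inner_smul_right, _root_.gram, mul_comm]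

lemma eigenvalues_le_lamMax (i : Fin m) : (gram_isHermitian v).eigenvalues i ≤ lamMax v :=
  le_ciSup (Set.finite_range _).bddAbove i

lemma lamMax_nonneg : 0 ≤ lamMax v :=
  Real.iSup_nonneg (Matrix.posSemidef_gram ℝ v).eigenvalues_nonneg

lemma norm_sum_smul_sq_le (w : Fin m → ℝ) :
    ‖∑ i, w i • v i‖ ^ 2 ≤ lamMax v * ∑ i, w i ^ 2 := by
  have :=
    (gram_isHermitian v).dotProduct_mulVec_le_of_eigenvalues_le (eigenvalues_le_lamMax v) w
  rw [gram_eq_matrix_gram, ← star_trivial w, Matrix.star_dotProduct_gram_mulVec, star_trivial,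
    real_inner_self_eq_norm_sq] at this
  simpa [dotProduct, sq] using this

lemma sum_inner_sq_le_lamMax_mul (r : E3) : ∑ i, ⟪v i, r⟫ ^ 2 ≤ lamMax v * ‖r‖ ^ 2 := by
  set S := ∑ i, ⟪v i, r⟫ ^ 2
  set u := ∑ i, ⟪v i, r⟫ • v i
  have hur : ⟪u, r⟫ = S := by simp [u, S, sum_inner, real_inner_smul_left, sq]
  have hcs : S ^ 2 ≤ ‖u‖ ^ 2 * ‖r‖ ^ 2 := by
    have := real_inner_mul_inner_self_le u r
    rwa [real_inner_self_eq_norm_sq, real_inner_self_eq_norm_sq, ← sq, hur] at this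
  have hu : ‖u‖ ^ 2 ≤ lamMax v * S := norm_sum_smul_sq_le v _
  have key : S * S ≤ S * (lamMax v * ‖r‖ ^ 2) := by
    nlinarith [mul_le_mul_of_nonneg_right hu (sq_nonneg ‖r‖)]
  rcases (show 0 ≤ S by positivity).eq_or_lt with hS | hS
  · rw [← hS]; exact mul_nonneg (lamMax_nonneg v) (sq_nonneg _)
  · exact le_of_mul_le_mul_left key hS

lemma exists_norm_sq_eq_lamMax_and_sum_inner_sq_eq [NeZero m] :
    ∃ u : E3, ‖u‖ ^ 2 = lamMax v ∧ ∑ i, ⟪v i, u⟫ ^ 2 = lamMax v * ‖u‖ ^ 2 := by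
  have hG := gram_isHermitian v
  obtain ⟨k, hk⟩ := exists_eq_ciSup_of_finite (f := hG.eigenvalues)
  set w : Fin m → ℝ := (hG.eigenvectorBasis k).ofLp
  have hw : ∑ j, w j ^ 2 = 1 := by
    rw [← EuclideanSpace.real_norm_sq_eq, hG.eigenvectorBasis.orthonormal.1 k, one_pow]
  have hvu (i : Fin m) : ⟪v i, ∑ j, w j • v j⟫ = lamMax v * w i := by
    rw [← gram_mulVec, hG.mulVec_eigenvectorBasis, hk]; rfl
  have hu : ‖∑ j, w j • v j‖ ^ 2 = lamMax v := by
    rw [← real_inner_self_eq_norm_sq, sum_inner]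
    simp only [real_inner_smul_left, hvu, mul_left_comm _ (lamMax v), ← Finset.mul_sum, ← sq, hw,
      mul_one]
  refine ⟨∑ j, w j • v j, hu, ?_⟩
  simp only [hvu, mul_pow, ← Finset.mul_sum, hw, hu]
  ring

lemma exists_norm_le_one_sum_inner_sq_eq_lamMax [NeZero m] :
    ∃ r : E3, ‖r‖ ≤ 1 ∧ ∑ i, ⟪v i, r⟫ ^ 2 = lamMax v := by
  obtain ⟨u, hu, hsum⟩ := exists_norm_sq_eq_lamMax_and_sum_inner_sq_eq v
  rcases eq_or_ne u 0 with rfl | hu0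
  · exact ⟨0, by simp, by simpa using hu⟩
  · refine ⟨‖u‖⁻¹ • u, by simp [norm_smul, hu0], ?_⟩
    simp only [real_inner_smul_right, mul_pow, ← Finset.mul_sum, hsum, ← hu]
    field_simp

end Gram

theorem sum_variances_three_observables_isLeast_general
    (a0 b0 c0 : ℝ) (a b c : E3) :
    IsLeast {v : ℝ | ∃ ρ : Matrix (Fin 2) (Fin 2) ℂ, IsDensityMatrix ρ ∧
        v = variance (qObs a0 a) ρ + variance (qObs b0 b) ρ + variance (qObs c0 c) ρ}
      ((gram ![a, b, c]).trace - lamMax ![a, b, c]) := by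
  have hsum (r : E3) : variance (qObs a0 a) (blochState r) + variance (qObs b0 b) (blochState r)
      + variance (qObs c0 c) (blochState r)
        = (gram ![a, b, c]).trace - ∑ i, ⟪![a, b, c] i, r⟫ ^ 2 := by
    simp only [variance_qObs_blochState, trace_gram, Fin.sum_univ_three, Matrix.cons_val_zero,
      Matrix.cons_val_one, Matrix.cons_val_two, Matrix.tail_cons, Matrix.head_cons]
    ring
  constructor
  · obtain ⟨r, hr, hmax⟩ := exists_norm_le_one_sum_inner_sq_eq_lamMax ![a, b, c]
    exact ⟨blochState r, isDensityMatrix_iff_exists_blochState.2 ⟨r, hr, rfl⟩, by rw [hsum, hmax]⟩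
  · rintro _ ⟨ρ, hρ, rfl⟩
    obtain ⟨r, hr, rfl⟩ := isDensityMatrix_iff_exists_blochState.1 hρ
    have hr2 : ‖r‖ ^ 2 ≤ 1 := pow_le_one₀ (norm_nonneg r) hr
    have := sum_inner_sq_le_lamMax_mul ![a, b, c] r
    rw [hsum]
    nlinarith [lamMax_nonneg ![a, b, c]]

/-- the optimal state-independent lower bound for the sum of the variances of
three qubit observables. -/
theorem sum_variances_three_observables_isLeast
    (a0 b0 c0 : ℝ) (a b c : E3) (habc : LinearIndependent ℝ ![a, b, c]) :
    IsLeast {v : ℝ | ∃ ρ : Matrix (Fin 2) (Fin 2) ℂ, IsDensityMatrix ρ ∧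
        v = variance (qObs a0 a) ρ + variance (qObs b0 b) ρ + variance (qObs c0 c) ρ}
      ((gram ![a, b, c]).trace - lamMax ![a, b, c]) :=
  sum_variances_three_observables_isLeast_general a0 b0 c0 a b c

end
end
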